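/- arXiv:1306.0720 — 4 statements merged into one kernel-verified Lean document; each statement's English description precedes it below -/
import Mathlib

section
/- For a row contraction T on H, the n-th defect dimension Δ_T^n = dim(closure of range of (I - Ψ_T^n(I))) satisfies Δ_T^n ≤ (1 + d + d^2 + ... + d^{n-1}) Δ_T, where Δ_T is the first defect dimension. -/
open ContinuousLinearMap

/-- The completely positive map `Ψ_T(X) = ∑ i, T i X (T i)*` associated to a `d`-tuple. -/
noncomputable def psiMap {H : Type*} [NormedAddCommGroup H] [InnerProductSpace ℂ H]
    [CompleteSpace H] {d : ℕ} (T : Fin d → H →L[ℂ] H) (X : H →L[ℂ] H) : H →L[ℂ] H :=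
  ∑ i, T i ∘L X ∘L adjoint (T i)

/-- The `n`-th defect space: the closure of the range of `I - Ψ_T^n(I)`. -/
noncomputable def defectSpace {H : Type*} [NormedAddCommGroup H] [InnerProductSpace ℂ H]
    [CompleteSpace H] {d : ℕ} (T : Fin d → H →L[ℂ] H) (n : ℕ) : Submodule ℂ H :=
  (LinearMap.range ((1 - (psiMap T)^[n] 1 : H →L[ℂ] H) : H →ₗ[ℂ] H)).topologicalClosure
/-!
With `D = I - Ψ(I)`, the identity `I - Ψⁿ(I) = ∑_{k<n} Ψᵏ(D)` telescopes, and
`Ψᵏ(D) x = ∑ T_w D T_w* x` over words `w` of length `k`, so the range of `Ψᵏ(D)` lies in the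
span of the images of `ran D` under the `dᵏ` words, of dimension at most `dᵏ Δ_T`. Summing over
`k < n` gives a finite-dimensional, hence closed, subspace containing `ran (I - Ψⁿ(I))`, and
so also its closure.
-/

namespace Submodule

variable {K V ι : Type*} [DivisionRing K] [AddCommGroup V] [Module K V]

theorem rank_finset_sup_le (s : Finset ι) (p : ι → Submodule K V) :
    Module.rank K ↥(s.sup p) ≤ ∑ i ∈ s, Module.rank K ↥(p i) := by
  classical
  induction s using Finset.induction_on with
  | empty => simp
  | insert a s ha ih =>
    rw [Finset.sup_insert, Finset.sum_insert ha]
    exact (rank_add_le_rank_add_rank _ _).trans (add_le_add le_rfl ih)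

theorem rank_iSup_le_sum [Fintype ι] (p : ι → Submodule K V) :
    Module.rank K ↥(⨆ i, p i) ≤ ∑ i, Module.rank K ↥(p i) :=
  Finset.sup_univ_eq_iSup p ▸ rank_finset_sup_le Finset.univ p

def jointMap (T : ι → V →ₗ[K] V) (p : Submodule K V) : Submodule K V :=
  ⨆ i, p.map (T i)

variable (T : ι → V →ₗ[K] V)

theorem map_le_jointMap (i : ι) (p : Submodule K V) : p.map (T i) ≤ jointMap T p :=
  le_iSup (fun i => p.map (T i)) i

theorem jointMap_mono : Monotone (jointMap T) :=
  fun _ _ h => iSup_mono fun _ => map_mono h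

instance [Finite ι] (p : Submodule K V) [FiniteDimensional K p] :
    FiniteDimensional K (jointMap T p) :=
  finiteDimensional_iSup _

theorem finiteDimensional_jointMap_iterate [Finite ι] (p : Submodule K V) [FiniteDimensional K p]
    (k : ℕ) : FiniteDimensional K ((jointMap T)^[k] p) := by
  induction k with
  | zero => assumption
  | succ k ih => rw [Function.iterate_succ_apply']; infer_instance

theorem rank_jointMap_le [Fintype ι] (p : Submodule K V) :
    Module.rank K (jointMap T p) ≤ Fintype.card ι * Module.rank K p :=
  calc Module.rank K (jointMap T p) ≤ ∑ i, Module.rank K (p.map (T i)) := rank_iSup_le_sum _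
    _ ≤ ∑ _i : ι, Module.rank K p := Finset.sum_le_sum fun _ _ => rank_map_le _ _
    _ = Fintype.card ι * Module.rank K p := by simp

theorem rank_jointMap_iterate_le [Fintype ι] (p : Submodule K V) (k : ℕ) :
    Module.rank K ((jointMap T)^[k] p) ≤ (Fintype.card ι : Cardinal) ^ k * Module.rank K p := by
  induction k with
  | zero => rw [Function.iterate_zero_apply, pow_zero, one_mul]
  | succ k ih =>
    rw [Function.iterate_succ_apply', pow_succ', mul_assoc]
    exact (rank_jointMap_le T _).trans (mul_le_mul_right ih _)

end Submodule

theorem LinearMap.range_finset_sum_le {R M N ι : Type*} [Semiring R] [AddCommMonoid M]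
    [AddCommMonoid N] [Module R M] [Module R N] (s : Finset ι) (f : ι → M →ₗ[R] N) :
    range (∑ i ∈ s, f i) ≤ s.sup fun i => range (f i) := by
  rintro _ ⟨x, rfl⟩
  rw [LinearMap.sum_apply, Finset.sup_eq_iSup]
  exact Submodule.sum_mem_biSup fun i _ => mem_range_self _ x

section psiMap

variable {H : Type*} [NormedAddCommGroup H] [InnerProductSpace ℂ H] [CompleteSpace H]
  {d : ℕ} (T : Fin d → H →L[ℂ] H)

theorem psiMap_apply (X : H →L[ℂ] H) (x : H) :
    psiMap T X x = ∑ i, T i (X (adjoint (T i) x)) := by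
  simp [psiMap, sum_apply]

theorem psiMap_sub (A B : H →L[ℂ] H) : psiMap T (A - B) = psiMap T A - psiMap T B := by
  simp only [psiMap, comp_sub, sub_comp, Finset.sum_sub_distrib]

theorem psiMap_iterate_sub (k : ℕ) (A B : H →L[ℂ] H) :
    (psiMap T)^[k] (A - B) = (psiMap T)^[k] A - (psiMap T)^[k] B := by
  induction k generalizing A B with
  | zero => rfl
  | succ k ih => simp only [Function.iterate_succ_apply, psiMap_sub, ih]

theorem one_sub_psiMap_iterate_one (n : ℕ) :
    1 - (psiMap T)^[n] 1 = ∑ k ∈ Finset.range n, (psiMap T)^[k] (1 - psiMap T 1) := by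
  simp only [psiMap_iterate_sub, ← Function.iterate_succ_apply]
  exact (Finset.sum_range_sub' (fun k => (psiMap T)^[k] 1) n).symm

theorem range_psiMap_le (X : H →L[ℂ] H) :
    LinearMap.range (psiMap T X : H →ₗ[ℂ] H) ≤
      Submodule.jointMap (fun i => (T i : H →ₗ[ℂ] H)) (LinearMap.range (X : H →ₗ[ℂ] H)) := by
  rintro _ ⟨x, rfl⟩
  rw [coe_coe, psiMap_apply]
  exact Submodule.sum_mem _ fun i _ => Submodule.map_le_jointMap _ i _
    (Submodule.mem_map_of_mem (LinearMap.mem_range_self _ _))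

theorem range_psiMap_iterate_le (X : H →L[ℂ] H) (k : ℕ) :
    LinearMap.range ((psiMap T)^[k] X : H →ₗ[ℂ] H) ≤
      (Submodule.jointMap fun i => (T i : H →ₗ[ℂ] H))^[k] (LinearMap.range (X : H →ₗ[ℂ] H)) := by
  induction k with
  | zero => rfl
  | succ k ih =>
    rw [Function.iterate_succ_apply', Function.iterate_succ_apply']
    exact (range_psiMap_le T _).trans (Submodule.jointMap_mono _ ih)

end psiMap

theorem stmt4_general {H : Type*} [NormedAddCommGroup H] [InnerProductSpace ℂ H] [CompleteSpace H]
    {d : ℕ} (T : Fin d → H →L[ℂ] H)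
    (hfin : FiniteDimensional ℂ (defectSpace T 1)) :
    ∀ n : ℕ, Module.rank ℂ (defectSpace T n) ≤
      (∑ i ∈ Finset.range n, (d : Cardinal) ^ i) * Module.rank ℂ (defectSpace T 1) := by
  intro n
  set J := Submodule.jointMap fun i => (T i : H →ₗ[ℂ] H)
  set D := LinearMap.range ((1 - psiMap T 1 : H →L[ℂ] H) : H →ₗ[ℂ] H)
  have hD : D ≤ defectSpace T 1 := Submodule.le_topologicalClosure _
  have : FiniteDimensional ℂ D := Submodule.finiteDimensional_of_le hD
  have := Submodule.finiteDimensional_jointMap_iterate (fun i => (T i : H →ₗ[ℂ] H)) D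
  set U := (Finset.range n).sup fun k => J^[k] D
  have hU : defectSpace T n ≤ U := by
    refine Submodule.topologicalClosure_minimal _ ?_ U.closed_of_finiteDimensional
    rw [one_sub_psiMap_iterate_one, toLinearMap_sum]
    exact (LinearMap.range_finset_sum_le _ _).trans
      (Finset.sup_mono_fun fun k _ => range_psiMap_iterate_le T _ k)
  calc Module.rank ℂ (defectSpace T n) ≤ Module.rank ℂ U := Submodule.rank_mono hU
    _ ≤ ∑ k ∈ Finset.range n, Module.rank ℂ (J^[k] D) := Submodule.rank_finset_sup_le _ _
    _ ≤ ∑ k ∈ Finset.range n, (d : Cardinal) ^ k * Module.rank ℂ (defectSpace T 1) :=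
        Finset.sum_le_sum fun k _ => (Submodule.rank_jointMap_iterate_le _ D k).trans
          (by simpa using mul_le_mul_right (Submodule.rank_mono hD) _)
    _ = (∑ i ∈ Finset.range n, (d : Cardinal) ^ i) * Module.rank ℂ (defectSpace T 1) :=
        (Finset.sum_mul ..).symm

/-- For a row contraction `T` with finite first defect dimension `Δ_T`,
the `n`-th defect dimension satisfies `Δ_T^n ≤ (1 + d + ⋯ + d^{n-1}) Δ_T`. -/
theorem stmt4 {H : Type*} [NormedAddCommGroup H] [InnerProductSpace ℂ H] [CompleteSpace H]
    {d : ℕ} (T : Fin d → H →L[ℂ] H)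
    (hT : (1 - psiMap T 1).IsPositive)
    (hfin : FiniteDimensional ℂ (defectSpace T 1)) :
    ∀ n : ℕ, Module.rank ℂ (defectSpace T n) ≤
      (∑ i ∈ Finset.range n, (d : Cardinal) ^ i) * Module.rank ℂ (defectSpace T 1) :=
  stmt4_general T hfin
end

section
/- For a row contraction T, if n < m then D_m = D_n ∨ (closed span of T_{i_1}···T_{i_n}(D_{m-n}) over all words of length n), where D_k denotes the k-th defect space. -/
/-!
Write `Δ_k = I - Ψ_T^k(I)`. Expanding `Ψ_T^n` over words of length `n` gives
`Δ_{n+k} = Δ_n + ∑_{|w| = n} T_w Δ_k T_w*`, which at once puts the range of `Δ_{n+k}` inside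
`D_n + span {T_w x : x ∈ D_k}`. Conversely, for a row contraction every summand is positive, so
a vector killed by `Δ_{n+k}` is killed by `Δ_n`, and each `T_w*` maps it into `ker Δ_k`.
Since `D_k = (ker Δ_k)ᗮ`, this says `D_n ⊆ D_{n+k}` and `T_w D_k ⊆ D_{n+k}`.
-/

open ContinuousLinearMap

/-- The word operator `T_{w(0)} T_{w(1)} ⋯ T_{w(k-1)}` (the empty word gives the identity). -/
noncomputable def wordOp {H : Type*} [NormedAddCommGroup H] [InnerProductSpace ℂ H]
    [CompleteSpace H] {d : ℕ} (T : Fin d → H →L[ℂ] H) {k : ℕ} (w : Fin k → Fin d) :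
    H →L[ℂ] H :=
  (List.ofFn fun j => T (w j)).prod

namespace ContinuousLinearMap

variable {H : Type*} [NormedAddCommGroup H] [InnerProductSpace ℂ H] [CompleteSpace H]

lemma IsPositive.apply_eq_zero_iff_re_inner {A : H →L[ℂ] H} (hA : A.IsPositive) (z : H) :
    A z = 0 ↔ RCLike.re (inner ℂ (A z) z) = 0 := by
  obtain ⟨B, rfl⟩ :=
    CStarAlgebra.nonneg_iff_eq_star_mul_self.mp ((nonneg_iff_isPositive A).mpr hA)
  have hre : RCLike.re (inner ℂ ((star B * B) z) z) = ‖B z‖ ^ 2 := by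
    rw [star_eq_adjoint, mul_apply_eq_comp, adjoint_inner_left, inner_self_eq_norm_sq]
  refine ⟨fun h => by rw [h, inner_zero_left, map_zero], fun h => ?_⟩
  have hBz : B z = 0 := by
    rw [hre] at h
    exact norm_eq_zero.mp (pow_eq_zero_iff two_ne_zero |>.mp h)
  rw [mul_apply_eq_comp, hBz, map_zero]

end ContinuousLinearMap

section DefectOperators

variable {H : Type*} [NormedAddCommGroup H] [InnerProductSpace ℂ H] [CompleteSpace H]
  {d : ℕ} (T : Fin d → H →L[ℂ] H)

noncomputable def defectOp (k : ℕ) : H →L[ℂ] H := 1 - (psiMap T)^[k] 1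

lemma defectSpace_eq_closure_range_defectOp (k : ℕ) :
    defectSpace T k = (LinearMap.range (defectOp T k : H →ₗ[ℂ] H)).topologicalClosure :=
  rfl

lemma wordOp_cons {n : ℕ} (i : Fin d) (w : Fin n → Fin d) :
    wordOp T (Fin.cons i w) = T i * wordOp T w := by
  simp only [wordOp, List.ofFn_succ, List.prod_cons, Fin.cons_zero, Fin.cons_succ]

lemma psiMap_iterate_eq_sum_wordOp (n : ℕ) (X : H →L[ℂ] H) :
    (psiMap T)^[n] X = ∑ w : Fin n → Fin d, wordOp T w * X * adjoint (wordOp T w) := by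
  induction n with
  | zero => simp [wordOp, ← star_eq_adjoint]
  | succ n ih =>
    rw [Function.iterate_succ_apply', ih, ← (Fin.consEquiv fun _ => Fin d).sum_comp,
      Fintype.sum_prod_type, psiMap]
    refine Finset.sum_congr rfl fun i _ => ?_
    simp only [Fin.consEquiv, Equiv.coe_fn_mk, wordOp_cons, ← star_eq_adjoint, ← mul_def,
      Finset.sum_mul, Finset.mul_sum, star_mul, mul_assoc]

lemma defectOp_add (n k : ℕ) :
    defectOp T (n + k) =
      defectOp T n + ∑ w : Fin n → Fin d, wordOp T w * defectOp T k * adjoint (wordOp T w) := by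
  simp only [defectOp, Function.iterate_add_apply, psiMap_iterate_eq_sum_wordOp T n, mul_sub,
    sub_mul, Finset.sum_sub_distrib]
  abel

lemma isSelfAdjoint_defectOp (k : ℕ) : IsSelfAdjoint (defectOp T k) := by
  rw [defectOp, psiMap_iterate_eq_sum_wordOp]
  refine (IsSelfAdjoint.one _).sub (isSelfAdjoint_sum _ fun w _ => ?_)
  rw [mul_one, ← star_eq_adjoint]
  exact .mul_star_self _

lemma isPositive_defectOp (hT : (1 - psiMap T 1).IsPositive) (k : ℕ) :
    (defectOp T k).IsPositive := by
  rw [← nonneg_iff_isPositive]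
  induction k with
  | zero => simp [defectOp]
  | succ k ih =>
    rw [defectOp_add]
    refine add_nonneg ih (Finset.sum_nonneg fun w _ => ?_)
    rw [← star_eq_adjoint]
    exact star_right_conjugate_nonneg ((nonneg_iff_isPositive _).mpr hT) _

lemma re_inner_defectOp_add (n k : ℕ) (z : H) :
    RCLike.re (inner ℂ (defectOp T (n + k) z) z) =
      RCLike.re (inner ℂ (defectOp T n z) z) +
        ∑ w : Fin n → Fin d,
          RCLike.re (inner ℂ (defectOp T k (adjoint (wordOp T w) z))
            (adjoint (wordOp T w) z)) := by
  simp only [defectOp_add, add_apply, sum_apply, mul_apply_eq_comp, inner_add_left, sum_inner,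
    ← adjoint_inner_right (wordOp T _), map_add, map_sum]

lemma defectOp_apply_eq_zero_of_add (hT : (1 - psiMap T 1).IsPositive) (n k : ℕ) {z : H}
    (hz : defectOp T (n + k) z = 0) :
    defectOp T n z = 0 ∧ ∀ w : Fin n → Fin d, defectOp T k (adjoint (wordOp T w) z) = 0 := by
  have hpos := isPositive_defectOp T hT
  simp only [(hpos _).apply_eq_zero_iff_re_inner, re_inner_defectOp_add] at hz ⊢
  obtain ⟨hn, hsum⟩ := (add_eq_zero_iff_of_nonneg ((hpos n).re_inner_nonneg_left z)
    (Finset.sum_nonneg fun w _ => (hpos k).re_inner_nonneg_left _)).mp hz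
  exact ⟨hn, fun w => (Finset.sum_eq_zero_iff_of_nonneg
    (fun w _ => (hpos k).re_inner_nonneg_left _)).mp hsum w (Finset.mem_univ w)⟩

lemma defectSpace_eq_orthogonal_ker (k : ℕ) :
    defectSpace T k = (LinearMap.ker (defectOp T k : H →ₗ[ℂ] H))ᗮ := by
  rw [orthogonal_ker, (isSelfAdjoint_defectOp T k).adjoint_eq]
  rfl

lemma defectOp_apply_mem_defectSpace (k : ℕ) (x : H) : defectOp T k x ∈ defectSpace T k :=
  Submodule.le_topologicalClosure _ ⟨x, rfl⟩

lemma isClosed_defectSpace (k : ℕ) : IsClosed (defectSpace T k : Set H) :=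
  Submodule.isClosed_topologicalClosure _

lemma defectSpace_le_defectSpace_add (hT : (1 - psiMap T 1).IsPositive) (n k : ℕ) :
    defectSpace T n ≤ defectSpace T (n + k) := by
  rw [defectSpace_eq_orthogonal_ker, defectSpace_eq_orthogonal_ker]
  exact Submodule.orthogonal_le fun z hz => (defectOp_apply_eq_zero_of_add T hT n k hz).1

lemma wordOp_apply_mem_defectSpace_add (hT : (1 - psiMap T 1).IsPositive) {n k : ℕ}
    (w : Fin n → Fin d) {x : H} (hx : x ∈ defectSpace T k) :
    wordOp T w x ∈ defectSpace T (n + k) := by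
  rw [defectSpace_eq_orthogonal_ker] at hx ⊢
  intro z hz
  rw [← adjoint_inner_left]
  exact hx _ ((defectOp_apply_eq_zero_of_add T hT n k hz).2 w)

lemma defectSpace_add_le (n k : ℕ) :
    defectSpace T (n + k) ≤
      (defectSpace T n ⊔ Submodule.span ℂ {y : H | ∃ (w : Fin n → Fin d) (x : H),
        x ∈ defectSpace T k ∧ y = wordOp T w x}).topologicalClosure := by
  rw [defectSpace_eq_closure_range_defectOp]
  refine Submodule.topologicalClosure_mono ?_
  rintro _ ⟨x, rfl⟩
  simp only [ContinuousLinearMap.coe_coe, defectOp_add, add_apply, sum_apply, mul_apply_eq_comp]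
  refine add_mem (Submodule.mem_sup_left (defectOp_apply_mem_defectSpace T n x))
    (sum_mem fun w _ => Submodule.mem_sup_right (Submodule.subset_span ?_))
  exact ⟨w, _, defectOp_apply_mem_defectSpace T k _, rfl⟩

end DefectOperators

/-- For `n < m`, `D_m = D_n ∨ T^n (D_{m-n}^{d^n})`: the `m`-th defect space is the closed
join of `D_n` and the span of all `T_{i_1} ⋯ T_{i_n} x` with `x ∈ D_{m-n}`. -/
theorem stmt8 {H : Type*} [NormedAddCommGroup H] [InnerProductSpace ℂ H] [CompleteSpace H]
    {d : ℕ} (T : Fin d → H →L[ℂ] H)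
    (hT : (1 - psiMap T 1).IsPositive) :
    ∀ n m : ℕ, n < m →
      defectSpace T m =
        (defectSpace T n ⊔
          Submodule.span ℂ {y : H | ∃ (w : Fin n → Fin d) (x : H),
            x ∈ defectSpace T (m - n) ∧ y = wordOp T w x}).topologicalClosure := by
  intro n m hnm
  obtain ⟨k, rfl⟩ := Nat.exists_eq_add_of_le hnm.le
  rw [Nat.add_sub_cancel_left]
  refine le_antisymm (defectSpace_add_le T n k)
    (Submodule.topologicalClosure_minimal _ (sup_le (defectSpace_le_defectSpace_add T hT n k) ?_)
      (isClosed_defectSpace T _))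
  rw [Submodule.span_le]
  rintro _ ⟨w, x, hx, rfl⟩
  exact wordOp_apply_mem_defectSpace_add T hT w hx
end

section
/- Let T be a row contraction on an infinite-dimensional Hilbert space H with first defect dimension Δ_T = 1, say D_1 = ℂξ. Then T is maximal (i.e., Δ_T^n = 1 + d + ... + d^{n-1} for all n) if and only if there is no nonzero polynomial P in d noncommuting variables with P(T_1,...,T_d)ξ = 0. -/
open ContinuousLinearMap

/-!
With `D = I - Ψ_T(I)` and `E_n = I - Ψ_T^n(I)` one has `E_{n+1} = D + ∑ i, T_i E_n T_i*`, a sum of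
positive operators, so `E_{n+1} x = 0` forces `D x = 0` and `E_n T_i* x = 0` for every `i`. As `D`
is positive with closed range `ℂξ`, induction on `n` gives
`range E_n ⊆ V_n ⊆ (ker E_n)ᗮ = closure (range E_n)` for `V_n = span {T_w ξ : |w| < n}`, so the
`n`-th defect space is `V_n`. It has the maximal dimension `1 + d + ⋯ + d^{n-1}` for every `n`
exactly when the vectors `T_w ξ` are linearly independent, i.e. when `P ↦ P(T) ξ` is injective on
the free algebra, whose basis is the words.
-/

open Submodule RCLike
open scoped InnerProductSpace

section LinearIndependence

variable {K V ι : Type*} [DivisionRing K] [AddCommGroup V] [Module K V] {v : ι → V}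

theorem linearIndepOn_iff_rank_span_image {t : Set ι} (ht : t.Finite) :
    LinearIndepOn K v t ↔ Module.rank K (span K (v '' t)) = Nat.card t := by
  have := ht.fintype
  have := FiniteDimensional.span_of_finite K (ht.image v)
  rw [LinearIndepOn, linearIndependent_iff_card_eq_finrank_span, Set.finrank,
    ← Set.image_eq_range, ← Module.finrank_eq_rank, Nat.card_eq_fintype_card, Nat.cast_inj,
    eq_comm]

theorem linearIndependent_iff_forall_rank_span_image {s : ℕ → Set ι} (hs : ∀ n, (s n).Finite)
    (hcover : ∀ t : Finset ι, ∃ n, ↑t ⊆ s n) :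
    LinearIndependent K v ↔ ∀ n, Module.rank K (span K (v '' s n)) = Nat.card (s n) := by
  simp_rw [← linearIndepOn_iff_rank_span_image (hs _)]
  refine ⟨fun h n ↦ h.linearIndepOn _, fun h ↦ ?_⟩
  rw [linearIndependent_iff_finset_linearIndependent]
  intro t
  obtain ⟨n, hn⟩ := hcover t
  exact (h n).mono hn

theorem Module.Basis.injective_iff_linearIndependent {R M N : Type*} [Ring R] [AddCommGroup M]
    [Module R M] [AddCommGroup N] [Module R N] (b : Module.Basis ι R M) (f : M →ₗ[R] N) :
    Function.Injective f ↔ LinearIndependent R (f ∘ b) :=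
  ⟨fun hf ↦ (f.linearIndependent_iff (LinearMap.ker_eq_bot.mpr hf)).mpr b.linearIndependent,
    f.injective_of_linearIndependent b.span_eq⟩

end LinearIndependence

section Words

variable {α : Type*}

variable (α) in
def FreeMonoid.lengthLTEquivSigmaVector (n : ℕ) :
    {w : FreeMonoid α | w.length < n} ≃ Σ k : Fin n, List.Vector α k where
  toFun w := ⟨⟨w.1.length, w.2⟩, ⟨w.1.toList, rfl⟩⟩
  invFun p := ⟨FreeMonoid.ofList p.2.1, by simp [FreeMonoid.length, p.2.2]⟩
  left_inv w := rfl
  right_inv := by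
    rintro ⟨⟨k, hk⟩, l, hl⟩
    change l.length = k at hl
    subst hl
    rfl

theorem FreeMonoid.finite_setOf_length_lt [Finite α] (n : ℕ) :
    {w : FreeMonoid α | w.length < n}.Finite :=
  List.finite_length_lt α n

theorem FreeMonoid.natCard_setOf_length_lt [Fintype α] (n : ℕ) :
    Nat.card {w : FreeMonoid α | w.length < n} = ∑ k ∈ Finset.range n, Fintype.card α ^ k := by
  rw [Nat.card_congr (lengthLTEquivSigmaVector α n), Nat.card_sigma,
    ← Fin.sum_univ_eq_sum_range (Fintype.card α ^ ·)]
  simp [Nat.card_eq_fintype_card, card_vector]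

theorem FreeMonoid.exists_subset_setOf_length_lt (t : Finset (FreeMonoid α)) :
    ∃ n, ↑t ⊆ {w : FreeMonoid α | w.length < n} :=
  ⟨t.sup length + 1, fun _ hw ↦ Nat.lt_succ_of_le (Finset.le_sup (f := length) hw)⟩

theorem FreeAlgebra.basisFreeMonoid_apply {R X : Type*} [CommSemiring R] (w : FreeMonoid X) :
    basisFreeMonoid R X w = FreeMonoid.lift (ι R) w := by
  simp [basisFreeMonoid, equivMonoidAlgebraFreeMonoid]

theorem FreeAlgebra.lift_basisFreeMonoid {R X A : Type*} [CommSemiring R] [Semiring A]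
    [Algebra R A] (f : X → A) (w : FreeMonoid X) :
    lift R f (basisFreeMonoid R X w) = FreeMonoid.lift f w := by
  rw [basisFreeMonoid_apply]
  exact DFunLike.congr_fun
    (FreeMonoid.hom_eq (f := (lift R f : FreeAlgebra R X →* A).comp (FreeMonoid.lift (ι R)))
      (g := FreeMonoid.lift f) (by simp)) w

end Words

section Operators

variable {𝕜 E : Type*} [RCLike 𝕜] [NormedAddCommGroup E] [InnerProductSpace 𝕜 E] [CompleteSpace E]

theorem IsSelfAdjoint.orthogonal_ker {A : E →L[𝕜] E} (hA : IsSelfAdjoint A) :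
    (LinearMap.ker (A : E →ₗ[𝕜] E))ᗮ = (LinearMap.range (A : E →ₗ[𝕜] E)).topologicalClosure := by
  simpa [hA.adjoint_eq] using A.orthogonal_ker

variable {H : Type*} [NormedAddCommGroup H] [InnerProductSpace ℂ H] [CompleteSpace H]

theorem ContinuousLinearMap.IsPositive.apply_eq_zero_of_re_inner_eq_zero {A : H →L[ℂ] H}
    (hA : A.IsPositive) {x : H} (h : re ⟪A x, x⟫_ℂ = 0) : A x = 0 := by
  obtain ⟨B, rfl⟩ := CStarAlgebra.nonneg_iff_eq_star_mul_self.mp ((nonneg_iff_isPositive A).mpr hA)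
  have hB : B x = 0 := by
    simp only [star_eq_adjoint, mul_def, comp_apply, adjoint_inner_left] at h
    rw [inner_self_eq_norm_sq] at h
    simpa using h
  simp [hB]

end Operators

namespace RowContraction

variable {H : Type*} [NormedAddCommGroup H] [InnerProductSpace ℂ H] {d : ℕ} (T : Fin d → H →L[ℂ] H)

noncomputable def wordSpan (ξ : H) (n : ℕ) : Submodule ℂ H :=
  span ℂ ((fun w ↦ FreeMonoid.lift T w ξ) '' {w | w.length < n})

theorem injective_eval_iff_linearIndependent (ξ : H) :
    (∀ P : FreeAlgebra ℂ (Fin d), FreeAlgebra.lift ℂ T P ξ = 0 → P = 0) ↔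
      LinearIndependent ℂ (fun w ↦ FreeMonoid.lift T w ξ) := by
  let L : FreeAlgebra ℂ (Fin d) →ₗ[ℂ] H :=
    (ContinuousLinearMap.apply ℂ H ξ : (H →L[ℂ] H) →ₗ[ℂ] H) ∘ₗ (FreeAlgebra.lift ℂ T).toLinearMap
  refine (injective_iff_map_eq_zero L).symm.trans ?_
  rw [(FreeAlgebra.basisFreeMonoid ℂ (Fin d)).injective_iff_linearIndependent]
  congr! 1
  ext w
  simp [L, FreeAlgebra.lift_basisFreeMonoid]

variable {T} in
theorem map_wordSpan_le (i : Fin d) (ξ : H) (n : ℕ) :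
    (wordSpan T ξ n).map (T i : H →ₗ[ℂ] H) ≤ wordSpan T ξ (n + 1) := by
  rw [wordSpan, ← span_image]
  apply span_mono
  rintro _ ⟨_, ⟨w, hw, rfl⟩, rfl⟩
  exact ⟨FreeMonoid.of i * w, by simp at hw ⊢; omega, by simp⟩

variable [CompleteSpace H]

noncomputable def defectOp (n : ℕ) : H →L[ℂ] H := 1 - (psiMap T)^[n] 1

theorem defectSpace_eq_closure_range (n : ℕ) :
    defectSpace T n = (LinearMap.range (defectOp T n : H →ₗ[ℂ] H)).topologicalClosure :=
  rfl

theorem defectOp_succ (n : ℕ) :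
    defectOp T (n + 1) = defectOp T 1 + ∑ i, T i ∘L defectOp T n ∘L adjoint (T i) := by
  have hiter : (psiMap T)^[n] 1 = 1 - defectOp T n := (sub_sub_cancel _ _).symm
  rw [defectOp, Function.iterate_succ_apply', hiter, show defectOp T 1 = 1 - psiMap T 1 from rfl]
  simp only [psiMap, comp_sub, sub_comp, Finset.sum_sub_distrib]
  abel

variable {T}

theorem isPositive_defectOp (hT : (defectOp T 1).IsPositive) :
    ∀ n, (defectOp T n).IsPositive
  | 0 => by simp [defectOp, isPositive_zero]
  | n + 1 => by
    rw [defectOp_succ]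
    exact hT.add (isPositive_sum _ fun i _ ↦ (isPositive_defectOp hT n).conj_adjoint (T i))

theorem defectOp_succ_apply_eq_zero (hT : (defectOp T 1).IsPositive) {n : ℕ} {x : H}
    (hx : defectOp T (n + 1) x = 0) :
    defectOp T 1 x = 0 ∧ ∀ i, defectOp T n (adjoint (T i) x) = 0 := by
  have hE := isPositive_defectOp hT n
  have hpos (i : Fin d) : 0 ≤ re ⟪defectOp T n (adjoint (T i) x), adjoint (T i) x⟫_ℂ :=
    hE.re_inner_nonneg_left _
  have hsplit : re ⟪defectOp T 1 x, x⟫_ℂ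
      + ∑ i, re ⟪defectOp T n (adjoint (T i) x), adjoint (T i) x⟫_ℂ = 0 := by
    have := congrArg (fun y ↦ re ⟪y, x⟫_ℂ) hx
    rw [defectOp_succ] at this
    simpa only [add_apply, sum_apply, inner_add_left, sum_inner, map_add,
      map_sum, comp_apply, ← adjoint_inner_right, inner_zero_left, map_zero] using this
  obtain ⟨h1, hsum⟩ := (add_eq_zero_iff_of_nonneg (hT.re_inner_nonneg_left x)
    (Finset.sum_nonneg fun i _ ↦ hpos i)).mp hsplit
  refine ⟨hT.apply_eq_zero_of_re_inner_eq_zero h1, fun i ↦ ?_⟩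
  exact hE.apply_eq_zero_of_re_inner_eq_zero
    ((Finset.sum_eq_zero_iff_of_nonneg fun i _ ↦ hpos i).mp hsum i (Finset.mem_univ i))

theorem defectOp_apply_mem_wordSpan {ξ : H} (hD : defectSpace T 1 = span ℂ {ξ}) (n : ℕ)
    (x : H) : defectOp T n x ∈ wordSpan T ξ n := by
  induction n generalizing x with
  | zero => simp [defectOp]
  | succ n ih =>
    rw [defectOp_succ, add_apply, sum_apply]
    refine add_mem ?_ (sum_mem fun i _ ↦ map_wordSpan_le i ξ n (mem_map_of_mem (ih _)))
    have hξ : ξ ∈ wordSpan T ξ (n + 1) := subset_span ⟨1, by simp, by simp⟩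
    have hDx : defectOp T 1 x ∈ span ℂ {ξ} :=
      hD ▸ le_topologicalClosure _ (LinearMap.mem_range_self _ x)
    exact span_singleton_le_iff_mem _ _ |>.mpr hξ hDx

theorem wordSpan_le_orthogonal_ker (hT : (defectOp T 1).IsPositive) {ξ : H}
    (hD : defectSpace T 1 = span ℂ {ξ}) (n : ℕ) :
    wordSpan T ξ n ≤ (LinearMap.ker (defectOp T n : H →ₗ[ℂ] H))ᗮ := by
  induction n with
  | zero => simp [wordSpan]
  | succ n ih =>
    rw [wordSpan, span_le]
    rintro _ ⟨w, hw, rfl⟩ x hx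
    obtain ⟨hDx, hEx⟩ := defectOp_succ_apply_eq_zero hT hx
    induction w using FreeMonoid.casesOn with
    | one =>
      have hξ : ξ ∈ (LinearMap.ker (defectOp T 1 : H →ₗ[ℂ] H))ᗮ := by
        rw [hT.isSelfAdjoint.orthogonal_ker, ← defectSpace_eq_closure_range, hD]
        exact mem_span_singleton_self ξ
      simpa using inner_right_of_mem_orthogonal hDx hξ
    | of_mul i u =>
      have hu : FreeMonoid.lift T u ξ ∈ wordSpan T ξ n :=
        subset_span ⟨u, by simp at hw ⊢; omega, rfl⟩
      simpa [← adjoint_inner_left] using inner_right_of_mem_orthogonal (hEx i) (ih hu)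

theorem defectSpace_eq_wordSpan (hT : (defectOp T 1).IsPositive) {ξ : H}
    (hD : defectSpace T 1 = span ℂ {ξ}) (n : ℕ) : defectSpace T n = wordSpan T ξ n := by
  have : FiniteDimensional ℂ (wordSpan T ξ n) :=
    .span_of_finite ℂ ((FreeMonoid.finite_setOf_length_lt n).image _)
  apply le_antisymm
  · refine topologicalClosure_minimal _ ?_ (wordSpan T ξ n).closed_of_finiteDimensional
    rintro _ ⟨x, rfl⟩
    exact defectOp_apply_mem_wordSpan hD n x
  · rw [defectSpace_eq_closure_range, ← (isPositive_defectOp hT n).isSelfAdjoint.orthogonal_ker]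
    exact wordSpan_le_orthogonal_ker hT hD n

end RowContraction

theorem stmt13_general {H : Type*} [NormedAddCommGroup H] [InnerProductSpace ℂ H] [CompleteSpace H]
    {d : ℕ} (T : Fin d → H →L[ℂ] H)
    (hT : (1 - psiMap T 1).IsPositive)
    (ξ : H) (hD : defectSpace T 1 = Submodule.span ℂ {ξ}) :
    (∀ n : ℕ, Module.rank ℂ (defectSpace T n) = ∑ i ∈ Finset.range n, (d : Cardinal) ^ i)
      ↔
    (∀ P : FreeAlgebra ℂ (Fin d), (FreeAlgebra.lift ℂ T P) ξ = 0 → P = 0) := by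
  rw [RowContraction.injective_eval_iff_linearIndependent,
    linearIndependent_iff_forall_rank_span_image FreeMonoid.finite_setOf_length_lt
      FreeMonoid.exists_subset_setOf_length_lt]
  refine forall_congr' fun n ↦ ?_
  rw [RowContraction.defectSpace_eq_wordSpan hT hD, RowContraction.wordSpan,
    FreeMonoid.natCard_setOf_length_lt, Fintype.card_fin]
  push_cast
  rfl

/-- Characterization of maximality: a row contraction on an infinite-dimensional Hilbert
space with one-dimensional first defect space `D_1 = ℂξ` is maximal
(`Δ_T^n = 1 + d + ⋯ + d^{n-1}` for all `n`) iff no nonzero noncommutative polynomial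
`P` in `d` variables satisfies `P(T_1, …, T_d) ξ = 0`. -/
theorem stmt13 {H : Type*} [NormedAddCommGroup H] [InnerProductSpace ℂ H] [CompleteSpace H]
    {d : ℕ} (T : Fin d → H →L[ℂ] H)
    (hT : (1 - psiMap T 1).IsPositive)
    (hinf : ¬ FiniteDimensional ℂ H)
    (ξ : H) (hξ : ξ ≠ 0) (hD : defectSpace T 1 = Submodule.span ℂ {ξ}) :
    (∀ n : ℕ, Module.rank ℂ (defectSpace T n) = ∑ i ∈ Finset.range n, (d : Cardinal) ^ i)
      ↔
    (∀ P : FreeAlgebra ℂ (Fin d), (FreeAlgebra.lift ℂ T P) ξ = 0 → P = 0) :=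
  stmt13_general T hT ξ hD
end

section
/- Let T be a single contraction on a finite-dimensional Hilbert space H with Δ_T = 1 and D_1 = ℂξ. Then Δ_T^n = min(n, m) for all n (for some m ≤ dim H) if and only if the set {ξ, Tξ, ..., T^{m-1}ξ} is linearly independent and there exists a polynomial P of degree m with P(T)ξ = 0. -/
/-!
Telescoping gives `1 - Tⁿ T*ⁿ = ∑_{k<n} Tᵏ (1 - T T*) T*ᵏ`. The defect `1 - T T*` is self-adjoint
with range `ℂξ`, hence equal to `c |ξ⟩⟨ξ|` with `c ≠ 0`, so `1 - Tⁿ T*ⁿ = c ∑_{k<n} |Tᵏξ⟩⟨Tᵏξ|`,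
whose range is the Krylov space `span {ξ, Tξ, …, Tⁿ⁻¹ξ}`. The theorem is thus a statement about
Krylov spaces: their dimensions are `min n m` exactly when the first `m` iterates are independent
and `Tᵐξ` depends on them, i.e. when some polynomial of degree `m` kills `ξ`.
-/

open ContinuousLinearMap InnerProductSpace Polynomial

section Krylov

variable {K V : Type*} [Field K] [AddCommGroup V] [Module K V]

variable (K) in
def krylovSubspace (f : Module.End K V) (v : V) (n : ℕ) : Submodule K V :=
  Submodule.span K (Set.range fun k : Fin n => (f ^ (k : ℕ)) v)

variable {f : Module.End K V} {v : V}

lemma pow_apply_mem_krylovSubspace {k n : ℕ} (h : k < n) :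
    (f ^ k) v ∈ krylovSubspace K f v n :=
  Submodule.subset_span ⟨⟨k, h⟩, rfl⟩

lemma krylovSubspace_mono : Monotone (krylovSubspace K f v) := fun _ _ hmn =>
  Submodule.span_le.mpr <| Set.range_subset_iff.mpr fun k =>
    pow_apply_mem_krylovSubspace (k.2.trans_le hmn)

instance finiteDimensional_krylovSubspace (n : ℕ) : FiniteDimensional K (krylovSubspace K f v n) :=
  FiniteDimensional.span_of_finite K (Set.finite_range _)

lemma linearIndependent_iff_finrank_krylovSubspace (m : ℕ) :
    LinearIndependent K (fun i : Fin m => (f ^ (i : ℕ)) v) ↔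
      Module.finrank K (krylovSubspace K f v m) = m := by
  rw [linearIndependent_iff_card_eq_finrank_span, Fintype.card_fin, eq_comm]
  rfl

lemma apply_mem_krylovSubspace_of_pow_apply_mem {m : ℕ}
    (hm : (f ^ m) v ∈ krylovSubspace K f v m) {w : V} (hw : w ∈ krylovSubspace K f v m) :
    f w ∈ krylovSubspace K f v m := by
  induction hw using Submodule.span_induction with
  | mem _ hu =>
    obtain ⟨i, rfl⟩ := hu
    rw [← Module.End.mul_apply, ← pow_succ']
    rcases Nat.lt_or_ge ((i : ℕ) + 1) m with hlt | hge
    · exact pow_apply_mem_krylovSubspace hlt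
    · rwa [show (i : ℕ) + 1 = m by omega]
  | zero => simp
  | add _ _ _ _ hu hv => rw [map_add]; exact add_mem hu hv
  | smul a _ _ hu => rw [map_smul]; exact Submodule.smul_mem _ a hu

lemma pow_apply_mem_krylovSubspace_of_pow_apply_mem {m : ℕ}
    (hm : (f ^ m) v ∈ krylovSubspace K f v m) (k : ℕ) :
    (f ^ k) v ∈ krylovSubspace K f v m := by
  induction k with
  | zero =>
    rcases m.eq_zero_or_pos with rfl | hpos
    · exact hm
    · exact pow_apply_mem_krylovSubspace hpos
  | succ k ih =>
    rw [pow_succ', Module.End.mul_apply]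
    exact apply_mem_krylovSubspace_of_pow_apply_mem hm ih

lemma krylovSubspace_eq_of_pow_apply_mem {m n : ℕ}
    (hm : (f ^ m) v ∈ krylovSubspace K f v m) (hmn : m ≤ n) :
    krylovSubspace K f v n = krylovSubspace K f v m :=
  le_antisymm
    (Submodule.span_le.mpr <| Set.range_subset_iff.mpr fun k =>
      pow_apply_mem_krylovSubspace_of_pow_apply_mem hm k)
    (krylovSubspace_mono hmn)

lemma exists_aeval_apply_eq_zero_iff_pow_apply_mem_krylovSubspace (m : ℕ) :
    (∃ P : K[X], P.degree = m ∧ aeval f P v = 0) ↔ (f ^ m) v ∈ krylovSubspace K f v m := by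
  constructor
  · rintro ⟨P, hdeg, hP⟩
    have hlead : P.coeff m ≠ 0 := coeff_ne_zero_of_eq_degree hdeg
    rw [aeval_eq_sum_range, natDegree_eq_of_degree_eq_some hdeg, Finset.sum_range_succ] at hP
    simp only [LinearMap.add_apply, LinearMap.sum_apply, LinearMap.smul_apply] at hP
    have hlow : ∑ i ∈ Finset.range m, P.coeff i • (f ^ i) v ∈ krylovSubspace K f v m :=
      Submodule.sum_mem _ fun i hi =>
        Submodule.smul_mem _ _ (pow_apply_mem_krylovSubspace (Finset.mem_range.mp hi))
    have hlead_mem : P.coeff m • (f ^ m) v ∈ krylovSubspace K f v m := by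
      rw [eq_neg_of_add_eq_zero_right hP]
      exact neg_mem hlow
    exact (Submodule.smul_mem_iff _ hlead).mp hlead_mem
  · intro hm
    obtain ⟨c, hc⟩ := (Submodule.mem_span_range_iff_exists_fun K).mp hm
    refine ⟨X ^ m - ∑ i : Fin m, C (c i) * X ^ (i : ℕ), ?_, ?_⟩
    · have hlow : (∑ i : Fin m, C (c i) * X ^ (i : ℕ)).degree < (m : WithBot ℕ) :=
        (degree_sum_le _ _).trans_lt <| (Finset.sup_lt_iff (WithBot.bot_lt_coe m)).mpr
          fun i _ => (degree_C_mul_X_pow_le _ _).trans_lt (WithBot.coe_lt_coe.mpr i.2)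
      rw [degree_sub_eq_left_of_degree_lt (by rwa [degree_X_pow]), degree_X_pow]
    · simp [hc]

theorem finrank_krylovSubspace_eq_min_iff (m : ℕ) :
    (∀ n, Module.finrank K (krylovSubspace K f v n) = min n m) ↔
      LinearIndependent K (fun i : Fin m => (f ^ (i : ℕ)) v) ∧
        ∃ P : K[X], P.degree = m ∧ aeval f P v = 0 := by
  rw [exists_aeval_apply_eq_zero_iff_pow_apply_mem_krylovSubspace]
  constructor
  · intro h
    have hm : Module.finrank K (krylovSubspace K f v m) = m := by simpa using h m
    have hsucc : krylovSubspace K f v m = krylovSubspace K f v (m + 1) :=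
      Submodule.eq_of_le_of_finrank_eq (krylovSubspace_mono m.le_succ) (by rw [hm, h]; simp)
    exact ⟨(linearIndependent_iff_finrank_krylovSubspace m).mpr hm,
      hsucc ▸ pow_apply_mem_krylovSubspace m.lt_succ_self⟩
  · rintro ⟨hli, hmem⟩ n
    rcases le_total n m with hnm | hmn
    · have hrestrict : (fun i : Fin n => (f ^ (i : ℕ)) v) =
          (fun i : Fin m => (f ^ (i : ℕ)) v) ∘ Fin.castLE hnm := rfl
      rw [min_eq_left hnm, ← linearIndependent_iff_finrank_krylovSubspace, hrestrict]
      exact hli.comp _ (Fin.castLE_injective hnm)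
    · rw [min_eq_right hmn, krylovSubspace_eq_of_pow_apply_mem hmem hmn,
        (linearIndependent_iff_finrank_krylovSubspace m).mp hli]

end Krylov

lemma one_sub_pow_mul_pow_eq_sum {R : Type*} [Ring R] (a b : R) (n : ℕ) :
    1 - a ^ n * b ^ n = ∑ k ∈ Finset.range n, a ^ k * (1 - a * b) * b ^ k := by
  have hterm : ∀ k,
      a ^ k * (1 - a * b) * b ^ k = a ^ k * b ^ k - a ^ (k + 1) * b ^ (k + 1) := by
    intro k; rw [pow_succ, pow_succ']; noncomm_ring
  simp only [hterm, Finset.sum_range_sub', pow_zero, mul_one]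

lemma ContinuousLinearMap.toLinearMap_aeval {R M : Type*} [CommRing R] [TopologicalSpace M]
    [AddCommGroup M] [IsTopologicalAddGroup M] [Module R M] [ContinuousConstSMul R M]
    (T : M →L[R] M) (P : R[X]) :
    ((aeval T P : M →L[R] M) : M →ₗ[R] M) = aeval (T : M →ₗ[R] M) P :=
  (aeval_algHom_apply ({ toLinearMapRingHom with commutes' := fun _ => rfl } :
    (M →L[R] M) →ₐ[R] (M →ₗ[R] M)) T P).symm

section Defect

variable {𝕜 E : Type*} [RCLike 𝕜] [NormedAddCommGroup E] [InnerProductSpace 𝕜 E]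

lemma inner_sum_rankOne_self_apply {ι : Type*} [Fintype ι] (v : ι → E) (x : E) :
    inner 𝕜 x ((∑ i, rankOne 𝕜 (v i) (v i) : E →L[𝕜] E) x) =
      ((∑ i, ‖inner 𝕜 (v i) x‖ ^ 2 : ℝ) : 𝕜) := by
  simp only [sum_apply, rankOne_apply, inner_sum, inner_smul_right]
  push_cast
  refine Finset.sum_congr rfl fun i _ => ?_
  rw [← inner_conj_symm x (v i), RCLike.mul_conj]

lemma range_sum_rankOne_self [FiniteDimensional 𝕜 E] {ι : Type*} [Fintype ι] (v : ι → E) :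
    LinearMap.range ((∑ i, rankOne 𝕜 (v i) (v i) : E →L[𝕜] E) : E →ₗ[𝕜] E) =
      Submodule.span 𝕜 (Set.range v) := by
  set A : E →L[𝕜] E := ∑ i, rankOne 𝕜 (v i) (v i)
  refine le_antisymm ?_ ?_
  · rintro _ ⟨x, rfl⟩
    simp only [A, coe_coe, sum_apply, rankOne_apply]
    exact Submodule.sum_mem _ fun i _ => Submodule.smul_mem _ _ (Submodule.subset_span ⟨i, rfl⟩)
  · rw [Submodule.span_le, Set.range_subset_iff]
    intro i
    rw [SetLike.mem_coe, ← Submodule.orthogonal_orthogonal (LinearMap.range (A : E →ₗ[𝕜] E)),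
      Submodule.mem_orthogonal]
    intro x hx
    -- `x ⊥ range A` forces `0 = ⟪x, A x⟫ = ∑ⱼ |⟪v j, x⟫|²`.
    have hzero : ∑ j, ‖inner 𝕜 (v j) x‖ ^ 2 = 0 := by
      have := (Submodule.mem_orthogonal' _ _).mp hx (A x) ⟨x, rfl⟩
      exact_mod_cast (inner_sum_rankOne_self_apply v x).symm.trans this
    have hi := (Finset.sum_eq_zero_iff_of_nonneg fun j _ => by positivity).mp hzero i
      (Finset.mem_univ i)
    rw [inner_eq_zero_symm]
    simpa using hi

variable [CompleteSpace E]

lemma IsSelfAdjoint.exists_eq_smul_rankOne_of_range_eq_span {A : E →L[𝕜] E}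
    (hA : IsSelfAdjoint A) {ξ : E} (hrange : LinearMap.range (A : E →ₗ[𝕜] E) = 𝕜 ∙ ξ) :
    ∃ c : 𝕜, c ≠ 0 ∧ A = c • rankOne 𝕜 ξ ξ := by
  have hmem : ∀ x, ∃ a : 𝕜, a • ξ = A x := fun x =>
    Submodule.mem_span_singleton.mp (hrange ▸ LinearMap.mem_range_self (A : E →ₗ[𝕜] E) x)
  by_cases hξ : ξ = 0
  · refine ⟨1, one_ne_zero, ext fun x => ?_⟩
    obtain ⟨a, ha⟩ := hmem x
    simp [← ha, hξ]
  have hξξ : inner 𝕜 ξ ξ ≠ 0 := inner_self_ne_zero.mpr hξ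
  obtain ⟨b, hb⟩ := hmem ξ
  set c := starRingEnd 𝕜 b / inner 𝕜 ξ ξ
  have hA_eq : A = c • rankOne 𝕜 ξ ξ := by
    ext x
    obtain ⟨a, ha⟩ := hmem x
    have hsymm : inner 𝕜 ξ (A x) = inner 𝕜 (A ξ) x := (hA.isSymmetric ξ x).symm
    rw [← ha, ← hb, inner_smul_right, inner_smul_left] at hsymm
    rw [smul_apply, rankOne_apply, smul_smul, ← ha]
    congr 1
    rw [div_mul_eq_mul_div, eq_div_iff hξξ, hsymm]
  refine ⟨c, fun hc => hξ ?_, hA_eq⟩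
  have : (𝕜 ∙ ξ) = ⊥ := by
    rw [← hrange, hA_eq, hc, zero_smul]
    exact LinearMap.range_zero
  simpa using this

lemma one_sub_pow_mul_adjoint_pow_eq_smul_sum_rankOne {T : E →L[𝕜] E} {ξ : E} {c : 𝕜}
    (hD : 1 - T * adjoint T = c • rankOne 𝕜 ξ ξ) (n : ℕ) :
    1 - T ^ n * adjoint (T ^ n) =
      c • ∑ k : Fin n, rankOne 𝕜 ((T ^ (k : ℕ)) ξ) ((T ^ (k : ℕ)) ξ) := by
  rw [← star_eq_adjoint, star_pow, one_sub_pow_mul_pow_eq_sum, star_eq_adjoint, hD,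
    Finset.smul_sum,
    ← Fin.sum_univ_eq_sum_range (fun k => T ^ k * (c • rankOne 𝕜 ξ ξ) * (adjoint T) ^ k)]
  refine Finset.sum_congr rfl fun k _ => ?_
  rw [mul_smul_comm, smul_mul_assoc, mul_def, mul_def, comp_rankOne, rankOne_comp,
    ← star_eq_adjoint, star_pow, star_eq_adjoint, adjoint_adjoint]

lemma range_one_sub_pow_mul_adjoint_pow [FiniteDimensional 𝕜 E] {T : E →L[𝕜] E} {ξ : E}
    (hD : LinearMap.range ((1 - T * adjoint T : E →L[𝕜] E) : E →ₗ[𝕜] E) = 𝕜 ∙ ξ) (n : ℕ) :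
    LinearMap.range ((1 - T ^ n * adjoint (T ^ n) : E →L[𝕜] E) : E →ₗ[𝕜] E) =
      krylovSubspace 𝕜 (T : E →ₗ[𝕜] E) ξ n := by
  have hsa : IsSelfAdjoint (1 - T * adjoint T) := (IsSelfAdjoint.one _).sub (.mul_star_self T)
  obtain ⟨c, hc, hDc⟩ := hsa.exists_eq_smul_rankOne_of_range_eq_span hD
  rw [one_sub_pow_mul_adjoint_pow_eq_smul_sum_rankOne hDc, toLinearMap_smul,
    LinearMap.range_smul _ _ hc, range_sum_rankOne_self]
  simp_rw [krylovSubspace, ← toLinearMap_pow, coe_coe]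

end Defect

theorem stmt15_general {H : Type*} [NormedAddCommGroup H] [InnerProductSpace ℂ H]
    [FiniteDimensional ℂ H]
    (T : H →L[ℂ] H)
    (ξ : H)
    (hD : (LinearMap.range ((1 - T * adjoint T : H →L[ℂ] H) : H →ₗ[ℂ] H)).topologicalClosure =
      Submodule.span ℂ {ξ})
    (m : ℕ) :
    (∀ n : ℕ,
      Module.finrank ℂ
        ((LinearMap.range ((1 - T ^ n * adjoint (T ^ n) : H →L[ℂ] H) : H →ₗ[ℂ] H)).topologicalClosure) =
        min n m)
      ↔
    (LinearIndependent ℂ (fun i : Fin m => (T ^ (i : ℕ)) ξ) ∧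
      ∃ P : Polynomial ℂ, P.degree = (m : ℕ) ∧ (Polynomial.aeval T P) ξ = 0) := by
  have hclosed : ∀ K : Submodule ℂ H, K.topologicalClosure = K := fun K =>
    K.closed_of_finiteDimensional.submodule_topologicalClosure_eq
  rw [hclosed] at hD
  refine (forall_congr' fun n => by rw [hclosed, range_one_sub_pow_mul_adjoint_pow hD]).trans ?_
  simpa only [← toLinearMap_aeval, ← toLinearMap_pow, coe_coe] using
    finrank_krylovSubspace_eq_min_iff (f := (T : H →ₗ[ℂ] H)) (v := ξ) m

/-- For a single contraction `T` on a finite-dimensional Hilbert space with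
`D_1 = ℂξ` and `m ≤ dim H`: the defect dimensions satisfy `Δ_T^n = min(n, m)` for all `n`
iff `{ξ, Tξ, …, T^{m-1}ξ}` is linearly independent and there is a polynomial `P` of
degree `m` with `P(T)ξ = 0`. -/
theorem stmt15 {H : Type*} [NormedAddCommGroup H] [InnerProductSpace ℂ H]
    [FiniteDimensional ℂ H]
    (T : H →L[ℂ] H) (hT : ‖T‖ ≤ 1)
    (ξ : H) (hξ : ξ ≠ 0)
    (hD : (LinearMap.range ((1 - T * adjoint T : H →L[ℂ] H) : H →ₗ[ℂ] H)).topologicalClosure =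
      Submodule.span ℂ {ξ})
    (m : ℕ) (hm : m ≤ Module.finrank ℂ H) :
    (∀ n : ℕ,
      Module.finrank ℂ
        ((LinearMap.range ((1 - T ^ n * adjoint (T ^ n) : H →L[ℂ] H) : H →ₗ[ℂ] H)).topologicalClosure) =
        min n m)
      ↔
    (LinearIndependent ℂ (fun i : Fin m => (T ^ (i : ℕ)) ξ) ∧
      ∃ P : Polynomial ℂ, P.degree = (m : ℕ) ∧ (Polynomial.aeval T P) ξ = 0) :=
  stmt15_general T ξ hD m
end
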